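/- Let (f_n) be a sequence of concave differentiable functions from an open convex subset U of ℝ^m to ℝ converging pointwise to a function f, and suppose f is differentiable at a point x ∈ U. Then ∇f_n(x) → ∇f(x). -/

import Mathlib

open Filter Topology

/-!
Restricted to a line `t ↦ x + t • v`, a concave function lies below its tangent, so every
right difference quotient of `f n` at `x` bounds `∂ᵥ f n (x)` from below. For fixed `t` these
quotients converge to those of `f`, which approach `∂ᵥ f (x)` as `t → 0⁺`; hence
`liminf ∂ᵥ f n (x) ≥ ∂ᵥ f (x)`, and the same bound for `-v` gives the `limsup`. In finite
dimension, convergence of all directional derivatives is convergence of the gradients.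
-/

variable {E : Type*} [NormedAddCommGroup E] [NormedSpace ℝ E]

theorem ConcaveOn.slope_le_of_hasLineDerivAt {U : Set E} {f : E → ℝ} {f' : ℝ} {x v : E} {t : ℝ}
    (hf : ConcaveOn ℝ U f) (hx : x ∈ U) (ht : x + t • v ∈ U) (ht₀ : 0 < t)
    (hf' : HasLineDerivAt ℝ f f' x v) :
    slope (fun s => f (x + s • v)) 0 t ≤ f' := by
  have hline : ConcaveOn ℝ ((fun s : ℝ => x + s • v) ⁻¹' U) (fun s => f (x + s • v)) :=
    hf.comp_affineMap (AffineMap.const ℝ ℝ x + (LinearMap.smulRight LinearMap.id v).toAffineMap)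
  exact hline.slope_le_of_hasDerivAt (by simpa using hx) ht ht₀ hf'

theorem eventually_lt_of_hasLineDerivAt_of_concaveOn {ι : Type*} {l : Filter ι} {U : Set E}
    {f : ι → E → ℝ} {g : E → ℝ} {f' : ι → ℝ} {g' a : ℝ} {x v : E}
    (hf : ∀ i, ConcaveOn ℝ U (f i)) (hU : U ∈ 𝓝 x)
    (hlim : ∀ y ∈ U, Tendsto (fun i => f i y) l (𝓝 (g y)))
    (hf' : ∀ i, HasLineDerivAt ℝ (f i) (f' i) x v) (hg' : HasLineDerivAt ℝ g g' x v)
    (ha : a < g') : ∀ᶠ i in l, a < f' i := by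
  have hline : Tendsto (fun s : ℝ => x + s • v) (𝓝[>] 0) (𝓝 x) :=
    tendsto_nhdsWithin_of_tendsto_nhds (Continuous.tendsto' (by fun_prop) 0 x (by simp))
  obtain ⟨t, hgt, htU, ht₀⟩ := ((hg'.tendsto_slope.mono_left (nhdsGT_le_nhdsNE 0)).eventually
    (eventually_gt_nhds ha) |>.and ((hline.eventually_mem hU).and self_mem_nhdsWithin)).exists
  have hslope : Tendsto (fun i => slope (fun s => f i (x + s • v)) 0 t) l
      (𝓝 (slope (fun s => g (x + s • v)) 0 t)) := by
    simp only [slope_def_field, zero_smul, add_zero]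
    exact ((hlim _ htU).sub (hlim x (mem_of_mem_nhds hU))).div_const _
  filter_upwards [hslope.eventually (eventually_gt_nhds hgt)] with i hi
  exact hi.trans_le ((hf i).slope_le_of_hasLineDerivAt (mem_of_mem_nhds hU) htU ht₀ (hf' i))

theorem tendsto_fderiv_apply_of_concaveOn {ι : Type*} {l : Filter ι} {U : Set E}
    {f : ι → E → ℝ} {g : E → ℝ} {x : E}
    (hf : ∀ i, ConcaveOn ℝ U (f i)) (hU : U ∈ 𝓝 x)
    (hlim : ∀ y ∈ U, Tendsto (fun i => f i y) l (𝓝 (g y)))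
    (hfx : ∀ i, DifferentiableAt ℝ (f i) x) (hgx : DifferentiableAt ℝ g x) (v : E) :
    Tendsto (fun i => fderiv ℝ (f i) x v) l (𝓝 (fderiv ℝ g x v)) := by
  refine tendsto_order.2 ⟨fun a ha => ?_, fun b hb => ?_⟩
  · exact eventually_lt_of_hasLineDerivAt_of_concaveOn hf hU hlim
      (fun i => (hfx i).hasFDerivAt.hasLineDerivAt v) (hgx.hasFDerivAt.hasLineDerivAt v) ha
  · simpa using eventually_lt_of_hasLineDerivAt_of_concaveOn hf hU hlim
      (fun i => (hfx i).hasFDerivAt.hasLineDerivAt (-v)) (hgx.hasFDerivAt.hasLineDerivAt (-v))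
      (a := -b) (by simpa using hb)

theorem tendsto_of_forall_tendsto_inner {F : Type*} [NormedAddCommGroup F] [InnerProductSpace ℝ F]
    [FiniteDimensional ℝ F] {ι : Type*} {l : Filter ι} {w : ι → F} {w₀ : F}
    (h : ∀ v, Tendsto (fun i => inner ℝ (w i) v) l (𝓝 (inner ℝ w₀ v))) :
    Tendsto w l (𝓝 w₀) := by
  let b := stdOrthonormalBasis ℝ F
  rw [← b.sum_repr' w₀, funext fun i => (b.sum_repr' (w i)).symm]
  refine tendsto_finsetSum _ fun j _ => (Tendsto.smul_const ?_ _)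
  simpa only [real_inner_comm] using h (b j)

theorem tendsto_gradient_of_concaveOn {F : Type*} [NormedAddCommGroup F] [InnerProductSpace ℝ F]
    [FiniteDimensional ℝ F] {ι : Type*} {l : Filter ι} {U : Set F}
    {f : ι → F → ℝ} {g : F → ℝ} {x : F}
    (hf : ∀ i, ConcaveOn ℝ U (f i)) (hU : U ∈ 𝓝 x)
    (hlim : ∀ y ∈ U, Tendsto (fun i => f i y) l (𝓝 (g y)))
    (hfx : ∀ i, DifferentiableAt ℝ (f i) x) (hgx : DifferentiableAt ℝ g x) :
    Tendsto (fun i => gradient (f i) x) l (𝓝 (gradient g x)) :=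
  tendsto_of_forall_tendsto_inner fun v => by
    simpa only [gradient, InnerProductSpace.toDual_symm_apply] using
      tendsto_fderiv_apply_of_concaveOn hf hU hlim hfx hgx v

theorem stmt_5_general (m : ℕ) (U : Set (EuclideanSpace ℝ (Fin m)))
    (hUopen : IsOpen U)
    (f : ℕ → EuclideanSpace ℝ (Fin m) → ℝ) (g : EuclideanSpace ℝ (Fin m) → ℝ)
    (hconc : ∀ n, ConcaveOn ℝ U (f n))
    (hdiff : ∀ n, DifferentiableOn ℝ (f n) U)
    (hptwise : ∀ x ∈ U, Tendsto (fun n => f n x) atTop (𝓝 (g x)))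
    (x : EuclideanSpace ℝ (Fin m)) (hx : x ∈ U)
    (hgx : DifferentiableAt ℝ g x) :
    Tendsto (fun n => gradient (f n) x) atTop (𝓝 (gradient g x)) :=
  tendsto_gradient_of_concaveOn hconc (hUopen.mem_nhds hx) hptwise
    (fun n => (hdiff n).differentiableAt (hUopen.mem_nhds hx)) hgx

/-- Griffiths' lemma: if concave differentiable `f_n : U → ℝ` converge
pointwise on the open convex set `U ⊆ ℝ^m` to `f`, and `f` is differentiable at `x ∈ U`,
then `∇f_n(x) → ∇f(x)`. -/
theorem stmt_5 (m : ℕ) (U : Set (EuclideanSpace ℝ (Fin m)))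
    (hUopen : IsOpen U) (hUconv : Convex ℝ U)
    (f : ℕ → EuclideanSpace ℝ (Fin m) → ℝ) (g : EuclideanSpace ℝ (Fin m) → ℝ)
    (hconc : ∀ n, ConcaveOn ℝ U (f n))
    (hdiff : ∀ n, DifferentiableOn ℝ (f n) U)
    (hptwise : ∀ x ∈ U, Tendsto (fun n => f n x) atTop (𝓝 (g x)))
    (x : EuclideanSpace ℝ (Fin m)) (hx : x ∈ U)
    (hgx : DifferentiableAt ℝ g x) :
    Tendsto (fun n => gradient (f n) x) atTop (𝓝 (gradient g x)) :=
  stmt_5_general m U hUopen f g hconc hdiff hptwise x hx hgx
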